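/- Let R be a commutative coherent ring and let G be a finite group. Then the group ring R[G] is left and right coherent. -/

import Mathlib

/-! Preamble: basic notions of relative homological algebra over a
(possibly noncommutative) ring.  Right `R`-modules are modeled as
(left) modules over the opposite ring `Rᵐᵒᵖ`. -/

open CategoryTheory Opposite

noncomputable section

/-- The Ext group `Ext^n(A, B)` in the category of left `S`-modules,
computed as a derived functor (of `ℤ`-modules). -/
def extGroup (S : Type) [Ring S] (n : ℕ) (A B : ModuleCat.{0} S) : Type :=
  ((_root_.Ext ℤ (ModuleCat.{0} S) n).obj (op A)).obj B

/-- Vanishing of the Ext group `Ext^n(A, B)`. -/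
def extVanish (S : Type) [Ring S] (n : ℕ) (A B : ModuleCat.{0} S) : Prop :=
  Subsingleton (extGroup S n A B)

/-- A module `E` is FP-injective if `Ext¹(F, E) = 0` for every finitely
presented module `F`. -/
def FPInjective (S : Type) [Ring S] (E : ModuleCat.{0} S) : Prop :=
  ∀ F : ModuleCat.{0} S, Module.FinitePresentation S F → extVanish S 1 F E

/-- `E` satisfies the Ext-criterion for FP-injective dimension `≤ n`:
`Ext^{n+1}(F, E) = 0` for every finitely presented `F`. -/
def fpInjDimLE (S : Type) [Ring S] (E : ModuleCat.{0} S) (n : ℕ) : Prop :=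
  ∀ F : ModuleCat.{0} S, Module.FinitePresentation S F → extVanish S (n + 1) F E

/-- `E` has FP-injective dimension exactly `n` : `n` is the least natural number
with `Ext^{n+1}(F, E) = 0` for all finitely presented `F`. -/
def fpInjDimEq (S : Type) [Ring S] (E : ModuleCat.{0} S) (n : ℕ) : Prop :=
  fpInjDimLE S E n ∧ ∀ m : ℕ, fpInjDimLE S E m → n ≤ m

/-- `E` has finite FP-injective dimension. -/
def fpInjDimFinite (S : Type) [Ring S] (E : ModuleCat.{0} S) : Prop :=
  ∃ n : ℕ, fpInjDimLE S E n

/-- A ring `S` is left coherent if every finitely generated left ideal is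
finitely presented (as a left `S`-module). -/
def LeftCoherent (S : Type) [Ring S] : Prop :=
  ∀ I : Submodule S S, I.FG → Module.FinitePresentation S I

/-- A ring `S` is right coherent if its opposite ring is left coherent. -/
def RightCoherent (S : Type) [Ring S] : Prop :=
  LeftCoherent Sᵐᵒᵖ

section BTensor

variable (R : Type) [Ring R]

/-- The subgroup of `A ⊗_ℤ B` by which one quotients to obtain the balanced
tensor product `A ⊗_R B` of a right `R`-module `A` and a left `R`-module `B`. -/
def btRel (A : Type) [AddCommGroup A] [Module Rᵐᵒᵖ A]
    (B : Type) [AddCommGroup B] [Module R B] :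
    Submodule ℤ (TensorProduct ℤ A B) :=
  Submodule.span ℤ
    {x | ∃ (a : A) (r : R) (b : B),
      x = (MulOpposite.op r • a) ⊗ₜ[ℤ] b - a ⊗ₜ[ℤ] (r • b)}

/-- The balanced tensor product `A ⊗_R B` of a right `R`-module `A` and a left
`R`-module `B`, defined as a quotient of `A ⊗_ℤ B`. -/
abbrev BTensor (A : Type) [AddCommGroup A] [Module Rᵐᵒᵖ A]
    (B : Type) [AddCommGroup B] [Module R B] : Type :=
  TensorProduct ℤ A B ⧸ btRel R A B

variable {A A' : Type} [AddCommGroup A] [Module Rᵐᵒᵖ A] [AddCommGroup A'] [Module Rᵐᵒᵖ A']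
variable {B B' : Type} [AddCommGroup B] [Module R B] [AddCommGroup B'] [Module R B']

/-- The map `A ⊗_R B → A ⊗_R B'` induced by a map `f : B → B'` of left
`R`-modules. -/
def BTensor.lmap (f : B →ₗ[R] B') (A : Type) [AddCommGroup A] [Module Rᵐᵒᵖ A] :
    BTensor R A B →ₗ[ℤ] BTensor R A B' :=
  Submodule.mapQ (btRel R A B) (btRel R A B')
    (TensorProduct.map LinearMap.id f.toAddMonoidHom.toIntLinearMap)
    (by
      rw [btRel, Submodule.span_le]
      rintro x ⟨a, r, b, rfl⟩
      simp only [SetLike.mem_coe, Submodule.mem_comap, map_sub, TensorProduct.map_tmul,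
        LinearMap.id_apply, AddMonoidHom.coe_toIntLinearMap, LinearMap.toAddMonoidHom_coe,
        map_smul]
      exact Submodule.subset_span ⟨a, r, f b, (by change (TensorProduct.map LinearMap.id f.toAddMonoidHom.toIntLinearMap : TensorProduct ℤ A B →ₗ[ℤ] TensorProduct ℤ A B') _ = _; simp)⟩)

/-- The map `A ⊗_R B → A' ⊗_R B` induced by a map `g : A → A'` of right
`R`-modules. -/
def BTensor.rmap (g : A →ₗ[Rᵐᵒᵖ] A') (B : Type) [AddCommGroup B] [Module R B] :
    BTensor R A B →ₗ[ℤ] BTensor R A' B :=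
  Submodule.mapQ (btRel R A B) (btRel R A' B)
    (TensorProduct.map g.toAddMonoidHom.toIntLinearMap LinearMap.id)
    (by
      rw [btRel, Submodule.span_le]
      rintro x ⟨a, r, b, rfl⟩
      simp only [SetLike.mem_coe, Submodule.mem_comap, map_sub, TensorProduct.map_tmul,
        LinearMap.id_apply, AddMonoidHom.coe_toIntLinearMap, LinearMap.toAddMonoidHom_coe,
        map_smul]
      exact Submodule.subset_span ⟨g a, r, b, (by change (TensorProduct.map g.toAddMonoidHom.toIntLinearMap LinearMap.id : TensorProduct ℤ A B →ₗ[ℤ] TensorProduct ℤ A' B) _ = _; simp)⟩)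

/-- A right `R`-module `A` is flat if the functor `A ⊗_R —` preserves
injectivity of maps of left `R`-modules. -/
def FlatRight (A : ModuleCat.{0} Rᵐᵒᵖ) : Prop :=
  ∀ (B B' : ModuleCat.{0} R) (f : B →ₗ[R] B'),
    Function.Injective f → Function.Injective (BTensor.lmap R f A)

/-- A left `R`-module `B` is flat if the functor `— ⊗_R B` preserves
injectivity of maps of right `R`-modules. -/
def FlatLeft (B : ModuleCat.{0} R) : Prop :=
  ∀ (A A' : ModuleCat.{0} Rᵐᵒᵖ) (g : A →ₗ[Rᵐᵒᵖ] A'),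
    Function.Injective g → Function.Injective (BTensor.rmap R g B)

end BTensor

/-- A module `N` is Ding injective if there is a doubly infinite exact sequence
of injective modules, with `N` as one of the kernels, which stays exact after
applying `Hom(E, —)` for every FP-injective module `E`. -/
def DingInjective (S : Type) [Ring S] (N : ModuleCat.{0} S) : Prop :=
  ∃ (I : ℤ → ModuleCat.{0} S) (d : ∀ n : ℤ, I n →ₗ[S] I (n + 1)),
    (∀ n, Module.Injective S (I n)) ∧
    (∀ n, Function.Exact (d n) (d (n + 1))) ∧
    Nonempty (N ≃ₗ[S] LinearMap.ker (d 0)) ∧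
    (∀ E : ModuleCat.{0} S, FPInjective S E → ∀ n : ℤ,
      Function.Exact (fun g : E →ₗ[S] I n => (d n).comp g)
        (fun g : E →ₗ[S] I (n + 1) => (d (n + 1)).comp g))

/-- A right `R`-module `M` is Ding projective if there is a doubly infinite
exact sequence of projective right modules, with `M` as one of the kernels,
which stays exact after applying `Hom(—, F)` for every flat right module `F`. -/
def DingProjective (R : Type) [Ring R] (M : ModuleCat.{0} Rᵐᵒᵖ) : Prop :=
  ∃ (P : ℤ → ModuleCat.{0} Rᵐᵒᵖ) (d : ∀ n : ℤ, P n →ₗ[Rᵐᵒᵖ] P (n + 1)),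
    (∀ n, Module.Projective Rᵐᵒᵖ (P n)) ∧
    (∀ n, Function.Exact (d n) (d (n + 1))) ∧
    Nonempty (M ≃ₗ[Rᵐᵒᵖ] LinearMap.ker (d 0)) ∧
    (∀ F : ModuleCat.{0} Rᵐᵒᵖ, FlatRight R F → ∀ n : ℤ,
      Function.Exact (fun g : P (n + 1 + 1) →ₗ[Rᵐᵒᵖ] F => g.comp (d (n + 1)))
        (fun g : P (n + 1) →ₗ[Rᵐᵒᵖ] F => g.comp (d n)))

/-- A right `R`-module `M` is Ding flat if there is a doubly infinite exact
sequence of flat right modules, with `M` as one of the kernels, which stays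
exact after applying `— ⊗_R E` for every FP-injective left module `E`. -/
def DingFlat (R : Type) [Ring R] (M : ModuleCat.{0} Rᵐᵒᵖ) : Prop :=
  ∃ (F : ℤ → ModuleCat.{0} Rᵐᵒᵖ) (d : ∀ n : ℤ, F n →ₗ[Rᵐᵒᵖ] F (n + 1)),
    (∀ n, FlatRight R (F n)) ∧
    (∀ n, Function.Exact (d n) (d (n + 1))) ∧
    Nonempty (M ≃ₗ[Rᵐᵒᵖ] LinearMap.ker (d 0)) ∧
    (∀ E : ModuleCat.{0} R, FPInjective R E → ∀ n : ℤ,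
      Function.Exact (BTensor.rmap R (d n) E) (BTensor.rmap R (d (n + 1)) E))

/-- A left `R`-module `M` is Gorenstein flat if there is a doubly infinite
exact sequence of flat left modules, with `M` as one of the kernels, which
stays exact after applying `E ⊗_R —` for every injective right module `E`. -/
def GorensteinFlat (R : Type) [Ring R] (M : ModuleCat.{0} R) : Prop :=
  ∃ (F : ℤ → ModuleCat.{0} R) (d : ∀ n : ℤ, F n →ₗ[R] F (n + 1)),
    (∀ n, FlatLeft R (F n)) ∧
    (∀ n, Function.Exact (d n) (d (n + 1))) ∧
    Nonempty (M ≃ₗ[R] LinearMap.ker (d 0)) ∧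
    (∀ E : ModuleCat.{0} Rᵐᵒᵖ, Module.Injective Rᵐᵒᵖ E → ∀ n : ℤ,
      Function.Exact (BTensor.lmap R (d n) E) (BTensor.lmap R (d (n + 1)) E))

/-- A right `R`-module `M` has flat dimension `≤ n` : there is an exact
resolution `0 → F_n → ⋯ → F_0 → M → 0` by flat right modules (encoded as an
`ℕ`-indexed resolution which vanishes beyond degree `n`). -/
def flatDimLE (R : Type) [Ring R] (M : ModuleCat.{0} Rᵐᵒᵖ) (n : ℕ) : Prop :=
  ∃ (F : ℕ → ModuleCat.{0} Rᵐᵒᵖ) (d : ∀ k : ℕ, F (k + 1) →ₗ[Rᵐᵒᵖ] F k)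
    (ε : F 0 →ₗ[Rᵐᵒᵖ] M),
    (∀ k, FlatRight R (F k)) ∧
    Function.Surjective ε ∧
    Function.Exact (d 0) ε ∧
    (∀ k, Function.Exact (d (k + 1)) (d k)) ∧
    (∀ k, n < k → Subsingleton (F k))

/-- A right `R`-module has finite flat dimension. -/
def flatDimFinite (R : Type) [Ring R] (M : ModuleCat.{0} Rᵐᵒᵖ) : Prop :=
  ∃ n : ℕ, flatDimLE R M n

/-- A ring `R` is an `n`-FC ring if it is left and right coherent and has left
and right self FP-injective dimension equal to `n`. -/
def IsFCRing (R : Type) [Ring R] (n : ℕ) : Prop :=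
  LeftCoherent R ∧ RightCoherent R ∧
    fpInjDimEq R (ModuleCat.of R R) n ∧
    fpInjDimEq Rᵐᵒᵖ (ModuleCat.of Rᵐᵒᵖ Rᵐᵒᵖ) n

/-- A ring is Ding-Chen if it is an `n`-FC ring for some `n`. -/
def IsDingChen (R : Type) [Ring R] : Prop :=
  ∃ n : ℕ, IsFCRing R n

end

/-! `R[G]` and its opposite ring are free of finite rank over `R`. Over a coherent ring, every
finitely generated submodule of a finite free module is finitely presented: the property
"finitely generated submodules are finitely presented" is stable under extensions, so it passes
from `R` to `Rⁿ`. Hence a finitely generated left ideal `I` of a module-finite free `R`-algebra `S`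
is finitely presented over `R`, and then over `S`: for a surjection `Sᵏ → I`, the kernel is finitely
generated over `R` because `Sᵏ` is finite over `R`, a fortiori over `S`. -/

-- Bourbaki's "pseudo-coherent"; `LeftCoherent S` unfolds to `IsPseudoCoherent S S`.
def Module.IsPseudoCoherent (R M : Type*) [Ring R] [AddCommGroup M] [Module R M] : Prop :=
  ∀ P : Submodule R M, P.FG → Module.FinitePresentation R P

namespace Module.IsPseudoCoherent

variable {R M N : Type*} [Ring R] [AddCommGroup M] [Module R M] [AddCommGroup N] [Module R N]

theorem of_linearEquiv (hM : IsPseudoCoherent R M) (e : M ≃ₗ[R] N) : IsPseudoCoherent R N := by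
  intro P hP
  have : FinitePresentation R (P.map e.symm.toLinearMap) := hM _ (hP.map _)
  exact .of_equiv (e.symm.submoduleMap P).symm

theorem of_exact {E : Type*} [AddCommGroup E] [Module R E] (hM : IsPseudoCoherent R M)
    (hN : IsPseudoCoherent R N) {f : M →ₗ[R] E} {g : E →ₗ[R] N} (hf : Function.Injective f)
    (hfg : Function.Exact f g) : IsPseudoCoherent R E := by
  intro P hP
  have : Module.Finite R P := .of_fg hP
  let l := (g ∘ₗ P.subtype).rangeRestrict
  have hl : Function.Surjective l := LinearMap.surjective_rangeRestrict _
  have : FinitePresentation R (LinearMap.range (g ∘ₗ P.subtype)) := hN _ (Submodule.fg_range _)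
  have : Module.Finite R (LinearMap.ker l) := .of_fg (FinitePresentation.fg_ker l hl)
  let j : LinearMap.ker l →ₗ[R] E := P.subtype ∘ₗ (LinearMap.ker l).subtype
  have hj : Function.Injective j := P.injective_subtype.comp (Submodule.injective_subtype _)
  have hjf : LinearMap.range j ≤ LinearMap.range f := by
    rintro _ ⟨⟨x, hx⟩, rfl⟩
    exact (hfg x).mp (congrArg Subtype.val (LinearMap.mem_ker.mp hx))
  -- by exactness, `f` identifies `ker l` with a finitely generated submodule `Q` of `M`
  let Q := (LinearMap.range j).comap f
  have hQ : Q.map f = LinearMap.range j := Submodule.map_comap_eq_of_le hjf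
  have : FinitePresentation R Q :=
    hM Q (Submodule.fg_of_fg_map_injective f hf (hQ ▸ Submodule.fg_range j))
  have : FinitePresentation R (LinearMap.ker l) :=
    .of_equiv <| (Submodule.equivMapOfInjective f hf Q).trans <|
      (LinearEquiv.ofEq _ _ hQ).trans (LinearEquiv.ofInjective j hj).symm
  exact finitePresentation_of_ker l hl

theorem prod (hM : IsPseudoCoherent R M) (hN : IsPseudoCoherent R N) :
    IsPseudoCoherent R (M × N) :=
  hM.of_exact hN LinearMap.inl_injective .inl_snd

theorem pi_fin (hR : IsPseudoCoherent R R) : ∀ n : ℕ, IsPseudoCoherent R (Fin n → R)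
  | 0 => fun _ _ => inferInstance
  | n + 1 => (hR.prod (pi_fin hR n)).of_linearEquiv (Fin.consLinearEquiv R fun _ => R)

theorem of_free [Module.Free R M] [Module.Finite R M] (hR : IsPseudoCoherent R R) :
    IsPseudoCoherent R M :=
  (pi_fin hR _).of_linearEquiv <|
    (LinearEquiv.funCongrLeft R R (Fintype.equivFin (Free.ChooseBasisIndex R M))).trans
      (Free.chooseBasis R M).equivFun.symm

end Module.IsPseudoCoherent

theorem Module.FinitePresentation.of_restrictScalars (R : Type*) {S M : Type*} [CommRing R]
    [Ring S] [Algebra R S] [Module.Finite R S] [AddCommGroup M] [Module R M] [Module S M]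
    [IsScalarTower R S M] [FinitePresentation R M] : FinitePresentation S M := by
  have : Module.Finite S M := .of_restrictScalars_finite R S M
  obtain ⟨k, φ, hφ⟩ := Module.Finite.exists_fin' S M
  have hker : (LinearMap.ker (φ.restrictScalars R)).FG := FinitePresentation.fg_ker _ hφ
  exact finitePresentation_of_surjective φ hφ (.of_restrictScalars R hker)

theorem leftCoherent_of_isPseudoCoherent (R : Type*) [CommRing R] {S : Type} [Ring S]
    [Algebra R S] [Module.Finite R S] (hS : Module.IsPseudoCoherent R S) : LeftCoherent S := by
  intro I hI
  have : Module.Finite S I := .of_fg hI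
  have hIR : (I.restrictScalars R).FG :=
    Module.Finite.iff_fg.mp (Module.Finite.trans S I : Module.Finite R I)
  have : Module.FinitePresentation R I := hS _ hIR
  exact .of_restrictScalars R

/-- If `R` is a commutative coherent ring and `G` is a finite
group, then the group ring `R[G]` is left and right coherent. -/
theorem statement19 (R : Type) [CommRing R] (hR : LeftCoherent R)
    (G : Type) [Group G] [Finite G] :
    LeftCoherent (MonoidAlgebra R G) ∧ RightCoherent (MonoidAlgebra R G) :=
  ⟨leftCoherent_of_isPseudoCoherent R (.of_free hR),
    leftCoherent_of_isPseudoCoherent R (.of_free hR)⟩
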